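/- Let G = (V, E) be a finite simple graph and let m ≥ k ≥ 1 be integers. Let T ⊆ V be an m-dominating set of G, let S, P ⊆ V ∖ T, let R ⊆ T, and let J be a set of edges with both endpoints in R such that G[T ∪ S] ∪ J is k-connected and, for every edge uv ∈ J, the induced subgraph G[T ∪ S ∪ P] contains k internally-disjoint u–v paths. Then T ∪ S ∪ P is a (k, m)-cds of G, i.e., T ∪ S ∪ P is an m-dominating set of G and the induced subgraph G[T ∪ S ∪ P] is k-connected. -/

import Mathlib

/-!
Domination passes to the superset `T ∪ S ∪ P`. For `k`-connectivity we use Menger's theorem: it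
suffices that `G[T ∪ S ∪ P]` has more than `k` vertices and that no set `X` of fewer than `k`
vertices separates two vertices outside `X`. A vertex outside `X` lies in `T` or, by
`m`-domination with `m ≥ k > |X|`, has a neighbour in `T` outside `X`. Two vertices of `T` are
joined by a walk of the `k`-connected graph `G[T ∪ S] ∪ J` avoiding `X`, and each `J`-edge on it
can be replaced by one of its `k` internally disjoint paths in `G[T ∪ S ∪ P]` that misses `X`.

Menger's theorem is proved as in Diestel's first proof, by induction on the number of edges. If
the contraction `G / xy` has no small `A`-`B` separator, its `k` disjoint paths lift to `G`.
Otherwise a small separator of `G / xy` yields an `A`-`B` separator `X ∋ x, y` of `G` with at most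
`k` vertices; then `G - xy` has `k` disjoint paths from `A` to `X` and from `B` to `X`, and these
glue at `X`.
-/

open SimpleGraph

/-- `HasIDPaths G u v k` : the graph `G` contains `k` pairwise internally disjoint
`u`-`v` paths, i.e. `k` distinct paths sharing no vertices other than `u` and `v`. -/
def HasIDPaths {V : Type*} (G : SimpleGraph V) (u v : V) (k : ℕ) : Prop :=
  ∃ P : Fin k → G.Path u v, Function.Injective P ∧
    ∀ i j, i ≠ j → ∀ w, w ∈ (P i).val.support → w ∈ (P j).val.support → w = u ∨ w = v

/-- `KConnected G k` : `G` has `k` internally disjoint paths between every pair of nodes. -/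
def KConnected {V : Type*} (G : SimpleGraph V) (k : ℕ) : Prop :=
  ∀ u v : V, u ≠ v → HasIDPaths G u v k

namespace SimpleGraph

variable {V : Type*} {G G' : SimpleGraph V} {A B X : Set V} {k : ℕ} {u v : V}

open Walk Function

namespace Walk

lemma exists_isPath_to_first_mem {a b : V} (p : G.Walk a b)
    (hX : ∃ z ∈ p.support, z ∈ X) :
    ∃ s ∈ X, ∃ q : G.Walk a s, q.IsPath ∧ q.support ⊆ p.support ∧
      ∀ z ∈ q.support, z ∈ X → z = s := by
  classical
  induction p with
  | nil =>
    obtain ⟨z, hz, hzX⟩ := hX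
    obtain rfl : z = _ := by simpa using hz
    exact ⟨z, hzX, nil, by simp, by simp, by simp⟩
  | @cons a c b h p ih =>
    by_cases ha : a ∈ X
    · exact ⟨a, ha, nil, by simp, by simp, by simp⟩
    obtain ⟨s, hs, q, -, hqp, hqX⟩ := ih <| by
      obtain ⟨z, hz, hzX⟩ := hX
      rcases List.mem_cons.mp hz with rfl | hz
      · exact absurd hzX ha
      · exact ⟨z, hz, hzX⟩
    have hsub : (cons h q).support ⊆ (cons h p).support := by
      simpa using List.subset_cons_of_subset _ hqp
    refine ⟨s, hs, (cons h q).bypass, bypass_isPath _,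
      fun z hz => hsub (support_bypass_subset_support _ hz), fun z hz hzX => ?_⟩
    rcases List.mem_cons.mp (support_bypass_subset_support _ hz) with rfl | hz
    · exact absurd hzX ha
    · exact hqX z hz hzX

lemma IsPath.append_of_forall_mem {u v w : V} {p : G.Walk u v} {q : G.Walk v w}
    (hp : p.IsPath) (hq : q.IsPath) (h : ∀ z ∈ p.support, z ∈ q.support → z = v) :
    (p.append q).IsPath := by
  have hq' := hq.support_nodup
  rw [← cons_tail_support q, List.nodup_cons] at hq'
  rw [isPath_def, support_append]
  refine List.nodup_append.mpr ⟨hp.support_nodup, hq'.2, fun z hzp z' hzq hzz => ?_⟩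
  subst hzz
  obtain rfl := h z hzp (List.mem_of_mem_tail hzq)
  exact hq'.1 hzq

lemma edges_subset_edgeSet_of_forall_adj {a b : V} (p : G.Walk a b)
    (h : ∀ c ∈ p.support, ∀ d ∈ p.support, G.Adj c d → G'.Adj c d) :
    ∀ e ∈ p.edges, e ∈ G'.edgeSet := by
  intro e he
  induction e using Sym2.ind with
  | _ c d =>
    exact h c (p.fst_mem_support_of_mem_edges he) d (p.snd_mem_support_of_mem_edges he)
      (p.adj_of_mem_edges he)

lemma notMem_support_of_forall_not_adj {x a b : V} (hx : ∀ z, ¬G.Adj x z) (hb : b ≠ x)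
    (p : G.Walk a b) : x ∉ p.support := by
  rw [mem_support_iff_exists_mem_edges]
  rintro (rfl | ⟨e, he, hxe⟩)
  · exact hb rfl
  · induction e using Sym2.ind with
    | _ c d =>
      have hcd := p.adj_of_mem_edges he
      rcases Sym2.mem_iff.mp hxe with rfl | rfl
      · exact hx _ hcd
      · exact hx _ hcd.symm

end Walk

def IsSeparator (G : SimpleGraph V) (A B X : Set V) : Prop :=
  ∀ ⦃a⦄, a ∈ A → ∀ ⦃b⦄, b ∈ B → ∀ p : G.Walk a b, ∃ z ∈ p.support, z ∈ X

def HasDisjointPaths (G : SimpleGraph V) (A B : Set V) (k : ℕ) : Prop :=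
  ∃ (a b : Fin k → V) (p : ∀ i, G.Walk (a i) (b i)), (∀ i, a i ∈ A) ∧ (∀ i, b i ∈ B) ∧
    (∀ i, (p i).IsPath) ∧ Pairwise fun i j => (p i).support.Disjoint (p j).support

namespace IsSeparator

lemma mono {Y : Set V} (h : G.IsSeparator A B X) (hXY : X ⊆ Y) : G.IsSeparator A B Y :=
  fun _ ha _ hb p => let ⟨z, hz, hzX⟩ := h ha hb p; ⟨z, hz, hXY hzX⟩

lemma of_le (hle : G ≤ G') (h : G'.IsSeparator A B X) : G.IsSeparator A B X :=
  fun _ ha _ hb p => by simpa using h ha hb (p.mapLe hle)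

lemma symm (h : G.IsSeparator A B X) : G.IsSeparator B A X :=
  fun _ hb _ ha p => by simpa using h ha hb p.reverse

end IsSeparator

lemma HasDisjointPaths.mono (hle : G ≤ G') (h : G.HasDisjointPaths A B k) :
    G'.HasDisjointPaths A B k := by
  obtain ⟨a, b, p, ha, hb, hp, hd⟩ := h
  exact ⟨a, b, fun i => (p i).mapLe hle, ha, hb, fun i => (hp i).mapLe hle,
    fun i j hij => by simpa using hd hij⟩

lemma HasDisjointPaths.exists_isPath_to_first_mem (h : G.HasDisjointPaths A X k) :
    ∃ (a s : Fin k → V) (p : ∀ i, G.Walk (a i) (s i)), (∀ i, a i ∈ A) ∧ (∀ i, s i ∈ X) ∧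
      (∀ i, (p i).IsPath) ∧ (Pairwise fun i j => (p i).support.Disjoint (p j).support) ∧
      ∀ i, ∀ z ∈ (p i).support, z ∈ X → z = s i := by
  obtain ⟨a, b, p, ha, hb, -, hd⟩ := h
  choose s hs q hq hqp hqX using fun i =>
    (p i).exists_isPath_to_first_mem ⟨b i, end_mem_support _, hb i⟩
  exact ⟨a, s, q, ha, hs, hq, fun i j hij z hzi hzj => hd hij (hqp i hzi) (hqp j hzj), hqX⟩

lemma IsSeparator.mem_of_mem_support (hX : G.IsSeparator A B X) {a b s t z : V}
    (ha : a ∈ A) (hb : b ∈ B) {p : G.Walk a s} {q : G.Walk b t} (hp : p.IsPath)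
    (hq : q.IsPath) (hpX : ∀ v ∈ p.support, v ∈ X → v = s)
    (hqX : ∀ v ∈ q.support, v ∈ X → v = t) (hzp : z ∈ p.support) (hzq : z ∈ q.support) :
    z ∈ X := by
  classical
  have key : ∀ {c e : V} (r : G.Walk c e), r.IsPath → (∀ v ∈ r.support, v ∈ X → v = e) →
      ∀ hz : z ∈ r.support, ∀ ξ ∈ (r.takeUntil z hz).support, ξ ∈ X → z ∈ X := by
    intro c e r hr hrX hz ξ hξ hξX
    obtain rfl := hrX ξ (support_takeUntil_subset_support r hz hξ) hξX
    by_contra hzX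
    exact endpoint_notMem_support_takeUntil hr hz (fun h => hzX (h ▸ hξX)) hξ
  -- `X` meets the walk `a ⇝ z ⇝ b` along `p` and `q`; a vertex of `X` met on `p` before `z` is
  -- the end `s` of `p`, which forces `z = s`
  obtain ⟨ξ, hξ, hξX⟩ := hX ha hb ((p.takeUntil z hzp).append (q.takeUntil z hzq).reverse)
  rcases (mem_support_append_iff _ _).mp hξ with hξ | hξ
  · exact key p hp hpX hzp ξ hξ hξX
  · exact key q hq hqX hzq ξ (by simpa using hξ) hξX

lemma exists_injective_comp_eq [Finite V] {s t : Fin k → V} (hs : Injective s)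
    (ht : Injective t) (hsX : ∀ i, s i ∈ X) (htX : ∀ i, t i ∈ X) (hX : X.ncard ≤ k) :
    ∃ σ : Fin k → Fin k, Injective σ ∧ ∀ i, t (σ i) = s i := by
  have hrange : Set.range t = X := by
    refine Set.eq_of_subset_of_ncard_le (Set.range_subset_iff.mpr htX) ?_
    rwa [Set.ncard_range_of_injective ht, Nat.card_eq_fintype_card, Fintype.card_fin]
  choose σ hσ using fun i => hrange ▸ hsX i
  exact ⟨σ, fun i j (h : σ i = σ j) => hs (by rw [← hσ i, ← hσ j, h]), hσ⟩

lemma HasDisjointPaths.join [Finite V] (hA : G.HasDisjointPaths A X k)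
    (hB : G.HasDisjointPaths B X k) (hX : G.IsSeparator A B X) (hk : X.ncard ≤ k) :
    G.HasDisjointPaths A B k := by
  obtain ⟨a, s, p, ha, hs, hp, hpd, hpX⟩ := hA.exists_isPath_to_first_mem
  obtain ⟨b, t, q, hb, ht, hq, hqd, hqX⟩ := hB.exists_isPath_to_first_mem
  have inj {c e : Fin k → V} {r : ∀ i, G.Walk (c i) (e i)}
      (hr : Pairwise fun i j => (r i).support.Disjoint (r j).support) :
      Injective e := fun i j hij => by
    by_contra hne
    exact hr hne (end_mem_support (r i)) (by rw [hij]; exact end_mem_support (r j))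
  obtain ⟨σ, hσ, hts⟩ := exists_injective_comp_eq (inj hpd) (inj hqd) hs ht hk
  have meet {i j z} (hzp : z ∈ (p i).support) (hzq : z ∈ (q j).support) : z = s i ∧ z = t j :=
    have hzX := hX.mem_of_mem_support (ha i) (hb j) (hp i) (hq j) (hpX i) (hqX j) hzp hzq
    ⟨hpX i z hzp hzX, hqX j z hzq hzX⟩
  have cross {i j z} (hzp : z ∈ (p i).support) (hzq : z ∈ (q (σ j)).support) : i = j := by
    obtain ⟨h1, h2⟩ := meet hzp hzq
    exact inj hpd (h1.symm.trans (h2.trans (hts j)))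
  refine ⟨a, b ∘ σ, fun i => (p i).append ((q (σ i)).reverse.copy (hts i) rfl), ha,
    fun i => hb _, fun i => ?_, fun i j hij z hzi hzj => ?_⟩
  · refine (hp i).append_of_forall_mem (by simpa using (hq (σ i)).reverse) fun z hzp hzq => ?_
    exact (meet hzp (by simpa using hzq)).1
  · simp only [mem_support_append_iff, support_copy, support_reverse, List.mem_reverse] at hzi hzj
    rcases hzi with hzi | hzi <;> rcases hzj with hzj | hzj
    · exact hpd hij hzi hzj
    · exact hij (cross hzi hzj)
    · exact hij (cross hzj hzi).symm
    · exact hqd (hσ.ne hij) hzi hzj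

lemma hasDisjointPaths_of_le_ncard_inter [Finite V] (h : k ≤ (A ∩ B).ncard) :
    G.HasDisjointPaths A B k := by
  obtain ⟨t, htAB, htk⟩ := Set.exists_subset_card_eq h
  have e : Fin k ≃ t := (Finite.equivFinOfCardEq (by rw [Nat.card_coe_set_eq, htk])).symm
  exact ⟨fun i => e i, fun i => e i, fun _ => nil, fun i => (htAB (e i).2).1,
    fun i => (htAB (e i).2).2, fun _ => by simp,
    fun i j hij => by simpa using fun h => hij (e.injective (Subtype.ext h.symm))⟩

lemma Walk.exists_walk_map {W : Type*} (f : V → W) {a b : V} (p : G.Walk a b) :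
    ∃ q : (G.map f).Walk (f a) (f b), ∀ z ∈ q.support, ∃ v ∈ p.support, f v = z := by
  classical
  induction p with
  | nil => exact ⟨nil, by simp⟩
  | @cons a c b h p ih =>
    obtain ⟨q, hq⟩ := ih
    have hsub : ∀ z ∈ q.support, ∃ v ∈ (cons h p).support, f v = z := fun z hz =>
      let ⟨v, hv, hvz⟩ := hq z hz; ⟨v, by simp [hv], hvz⟩
    by_cases hac : f a = f c
    · exact ⟨q.copy hac.symm rfl, by simpa using hsub⟩
    · have hadj : (G.map f).Adj (f a) (f c) := ⟨hac, a, c, h, rfl, rfl⟩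
      refine ⟨cons hadj q, fun z hz => ?_⟩
      rw [support_cons, List.mem_cons] at hz
      rcases hz with rfl | hz
      · exact ⟨a, by simp, rfl⟩
      · exact hsub z hz

lemma IsSeparator.of_map {W : Type*} {f : V → W} {Y : Set W}
    (h : (G.map f).IsSeparator (f '' A) (f '' B) Y) : G.IsSeparator A B (f ⁻¹' Y) := by
  intro a ha b hb p
  obtain ⟨q, hq⟩ := p.exists_walk_map f
  obtain ⟨z, hz, hzY⟩ := h ⟨a, ha, rfl⟩ ⟨b, hb, rfl⟩ q
  obtain ⟨v, hv, rfl⟩ := hq z hz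
  exact ⟨v, hv, hzY⟩

lemma ncard_edgeSet_deleteEdges_lt [Finite V] {x y : V} (hxy : G.Adj x y) :
    (G.deleteEdges {s(x, y)}).edgeSet.ncard < G.edgeSet.ncard := by
  rw [edgeSet_deleteEdges]
  exact Set.ncard_sdiff_singleton_lt_of_mem hxy

/- `G.map (update id x y)` plays the role of the contraction `G / xy`: the contracted vertex is
`y`, and `x` stays behind as an isolated vertex. -/
section Contraction

variable [DecidableEq V] {x y : V}

lemma ncard_edgeSet_map_update_lt [Finite V] (hxy : G.Adj x y) :
    (G.map (update id x y)).edgeSet.ncard < G.edgeSet.ncard := by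
  have hsub : (G.map (update id x y)).edgeSet ⊆
      Sym2.map (update id x y) '' (G.edgeSet \ {s(x, y)}) := by
    intro e he
    induction e using Sym2.ind with
    | _ c d =>
      obtain ⟨hcd, c', d', hadj, rfl, rfl⟩ := he
      refine ⟨s(c', d'), ⟨hadj, fun h => hcd ?_⟩, rfl⟩
      have hyx : y ≠ x := hxy.ne.symm
      rcases Sym2.eq_iff.mp h with ⟨rfl, rfl⟩ | ⟨rfl, rfl⟩ <;> simp [hyx]
  calc _ ≤ (Sym2.map (update id x y) '' (G.edgeSet \ {s(x, y)})).ncard :=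
        Set.ncard_le_ncard hsub (Set.toFinite _)
    _ ≤ (G.edgeSet \ {s(x, y)}).ncard := Set.ncard_image_le (Set.toFinite _)
    _ < G.edgeSet.ncard := Set.ncard_sdiff_singleton_lt_of_mem hxy

lemma exists_walk_update_id (hxy : G.Adj x y) (v : V) :
    ∃ q : G.Walk (update id x y v) v,
      ∀ z ∈ q.support, z = update id x y v ∨ (z = x ∧ update id x y v = y) := by
  by_cases hv : v = x
  · subst hv
    rw [update_self]
    exact ⟨cons hxy.symm nil, by simp⟩
  · rw [update_of_ne hv]
    exact ⟨nil, by simp⟩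

lemma Walk.exists_lift_map_update (hxy : G.Adj x y) {c d : V}
    (w : (G.map (update id x y)).Walk c d) {a b : V} (ha : update id x y a = c)
    (hb : update id x y b = d) :
    ∃ p : G.Walk a b, ∀ z ∈ p.support, z ∈ w.support ∨ (z = x ∧ y ∈ w.support) := by
  have start {a d : V} (w' : (G.map (update id x y)).Walk (update id x y a) d) (z : V)
      (hz : z = update id x y a ∨ (z = x ∧ update id x y a = y)) :
      z ∈ w'.support ∨ (z = x ∧ y ∈ w'.support) := by
    rcases hz with rfl | ⟨hzx, hy⟩
    · exact Or.inl (start_mem_support _)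
    · exact Or.inr ⟨hzx, (congrArg (· ∈ w'.support) hy).mp w'.start_mem_support⟩
  induction w generalizing a with
  | nil =>
    subst ha
    obtain ⟨qa, hqa⟩ := exists_walk_update_id hxy a
    obtain ⟨qb, hqb⟩ := exists_walk_update_id hxy b
    refine ⟨qa.reverse.append (qb.copy hb rfl), fun z hz => ?_⟩
    simp only [mem_support_append_iff, support_reverse, List.mem_reverse, support_copy] at hz
    rcases hz with hz | hz
    · exact start nil z (hqa z hz)
    · exact start nil z (hb ▸ hqb z hz)
  | @cons c e d h w ih =>
    subst ha
    obtain ⟨-, c', e', hadj, hc', rfl⟩ := id h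
    obtain ⟨p, hp⟩ := ih (a := e') rfl hb
    obtain ⟨qa, hqa⟩ := exists_walk_update_id hxy a
    obtain ⟨qc, hqc⟩ := exists_walk_update_id hxy c'
    refine ⟨qa.reverse.append ((qc.copy hc' rfl).append (cons hadj p)), fun z hz => ?_⟩
    simp only [mem_support_append_iff, support_reverse, List.mem_reverse, support_copy,
      support_cons, List.mem_cons] at hz
    rcases hz with hz | hz | rfl | hz
    · exact start (cons h w) z (hqa z hz)
    · exact start (cons h w) z (hc' ▸ hqc z hz)
    · exact start (cons h w) z (hc' ▸ hqc z (end_mem_support _))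
    · rcases hp z hz with hz | ⟨hzx, hy⟩
      · exact Or.inl (by simp [hz])
      · exact Or.inr ⟨hzx, by simp [hy]⟩

lemma HasDisjointPaths.of_map_update (hxy : G.Adj x y)
    (h : (G.map (update id x y)).HasDisjointPaths (update id x y '' A) (update id x y '' B) k) :
    G.HasDisjointPaths A B k := by
  obtain ⟨a, b, p, ha, hb, -, hd⟩ := h
  choose α hα hαa using ha
  choose β hβ hβb using hb
  choose q hq using fun i => (p i).exists_lift_map_update hxy (hαa i) (hβb i)
  have hfx : ∀ v, update id x y v ≠ x := fun v => by
    by_cases hv : v = x <;> simp [hv, hxy.ne.symm]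
  have hx : ∀ i, x ∉ (p i).support := fun i => notMem_support_of_forall_not_adj
    (fun z hz => by obtain ⟨-, u, -, -, hu, -⟩ := (map_adj' _ _ _ _).mp hz; exact hfx u hu)
    (hβb i ▸ hfx (β i)) (p i)
  refine ⟨α, β, fun i => (q i).bypass, hα, hβ, fun i => bypass_isPath _,
    fun i j hij z hzi hzj => ?_⟩
  rcases hq i z (support_bypass_subset_support _ hzi) with hzi | ⟨rfl, hyi⟩ <;>
    rcases hq j z (support_bypass_subset_support _ hzj) with hzj | ⟨hzx, hyj⟩
  · exact hd hij hzi hzj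
  · exact hx i (hzx ▸ hzi)
  · exact hx j hzj
  · exact hd hij hyi hyj

lemma IsSeparator.insert_of_map_update {Y : Set V}
    (hY : (G.map (update id x y)).IsSeparator (update id x y '' A) (update id x y '' B) Y) :
    G.IsSeparator A B (insert x Y) := by
  refine hY.of_map.mono fun z hz => ?_
  by_cases hzx : z = x
  · exact Or.inl hzx
  · exact Or.inr (by simpa [update_of_ne hzx] using hz)

lemma IsSeparator.of_map_update_of_notMem {Y : Set V}
    (hY : (G.map (update id x y)).IsSeparator (update id x y '' A) (update id x y '' B) Y)
    (hy : y ∉ Y) : G.IsSeparator A B Y := by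
  refine hY.of_map.mono fun z hz => ?_
  by_cases hzx : z = x
  · subst hzx
    exact absurd (by simpa using hz) hy
  · simpa [update_of_ne hzx] using hz

end Contraction

/- The initial segment of an `A`-`B` walk up to its first vertex in `X` cannot use the edge `xy`,
whose ends both lie in `X`. -/
lemma IsSeparator.of_isSeparator_deleteEdges {Z : Set V} {x y : V} (hX : G.IsSeparator A B X)
    (hxy : x ≠ y) (hx : x ∈ X) (hy : y ∈ X) (hZ : (G.deleteEdges {s(x, y)}).IsSeparator A X Z) :
    G.IsSeparator A B Z := by
  intro a ha b hb p
  obtain ⟨s, hs, q, -, hqp, hqX⟩ := p.exists_isPath_to_first_mem (hX ha hb p)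
  have hq : ∀ e ∈ q.edges, e ∈ (G.deleteEdges {s(x, y)}).edgeSet :=
    q.edges_subset_edgeSet_of_forall_adj fun c hc d hd hcd => by
      refine (deleteEdges_adj ..).mpr ⟨hcd, fun h => hxy ?_⟩
      rcases Sym2.eq_iff.mp (Set.mem_singleton_iff.mp h) with ⟨rfl, rfl⟩ | ⟨rfl, rfl⟩
      · exact (hqX _ hc hx).trans (hqX _ hd hy).symm
      · exact (hqX _ hd hx).trans (hqX _ hc hy).symm
  obtain ⟨z, hz, hzZ⟩ := hZ ha hs (q.transfer _ hq)
  exact ⟨z, hqp (by simpa using hz), hzZ⟩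

theorem hasDisjointPaths_of_forall_isSeparator [Finite V]
    (h : ∀ X, G.IsSeparator A B X → k ≤ X.ncard) : G.HasDisjointPaths A B k := by
  classical
  induction hn : G.edgeSet.ncard using Nat.strong_induction_on generalizing G A B with
  | _ n ih =>
  subst hn
  by_cases hE : ∃ x y, G.Adj x y
  swap
  · push Not at hE
    refine hasDisjointPaths_of_le_ncard_inter (h _ fun a ha b hb p => ?_)
    cases p with
    | nil => exact ⟨a, start_mem_support _, ha, hb⟩
    | cons hadj _ => exact absurd hadj (hE _ _)
  obtain ⟨x, y, hxy⟩ := hE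
  set f := update id x y
  by_cases hY : ∃ Y, (G.map f).IsSeparator (f '' A) (f '' B) Y ∧ Y.ncard < k
  swap
  · push Not at hY
    exact (ih _ (ncard_edgeSet_map_update_lt hxy) hY rfl).of_map_update hxy
  obtain ⟨Y, hY, hYk⟩ := hY
  have hyY : y ∈ Y := by
    by_contra hyY
    exact (h Y (hY.of_map_update_of_notMem hyY)).not_gt hYk
  have hX : G.IsSeparator A B (insert x Y) := hY.insert_of_map_update
  have hXk : (insert x Y).ncard ≤ k := (Set.ncard_insert_le x Y).trans hYk
  have hA := ih _ (ncard_edgeSet_deleteEdges_lt hxy) (A := A) (B := insert x Y)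
    (fun Z hZ => h Z (hX.of_isSeparator_deleteEdges hxy.ne (Set.mem_insert _ _)
      (Set.mem_insert_of_mem _ hyY) hZ)) rfl
  have hB := ih _ (ncard_edgeSet_deleteEdges_lt hxy) (A := B) (B := insert x Y)
    (fun Z hZ => h Z (hX.symm.of_isSeparator_deleteEdges hxy.ne (Set.mem_insert _ _)
      (Set.mem_insert_of_mem _ hyY) hZ).symm) rfl
  exact (hA.join hB (hX.of_le (deleteEdges_le _)) hXk).mono (deleteEdges_le _)

lemma Walk.exists_interior (huv : u ≠ v) (hadj : ¬G.Adj u v) (p : G.Walk u v) :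
    ∃ (a b : V) (q : G.Walk a b), G.Adj u a ∧ G.Adj b v ∧ u ∉ q.support ∧ v ∉ q.support ∧
      q.support ⊆ p.support := by
  classical
  obtain ⟨a, hua, r, hr⟩ := exists_eq_cons_of_ne huv p.bypass
  have hpath := p.bypass_isPath
  rw [hr, cons_isPath_iff] at hpath
  have hav : a ≠ v := fun h => hadj (h ▸ hua)
  obtain ⟨b, hvb, q, hq⟩ := exists_eq_cons_of_ne hav.symm r.reverse
  have hqpath := hpath.1.reverse
  rw [hq, cons_isPath_iff] at hqpath
  have hqr : q.reverse.support ⊆ r.support := fun z hz => by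
    have : z ∈ r.reverse.support := by rw [hq]; simp_all
    simpa using this
  refine ⟨a, b, q.reverse, hua, hvb.symm, fun h => hpath.2 (hqr h), by simpa using hqpath.2,
    fun z hz => support_bypass_subset_support p ?_⟩
  rw [hr]
  exact List.mem_cons_of_mem _ (hqr hz)

lemma IsSeparator.sdiff_of_deleteIncidenceSet (huv : u ≠ v) (hadj : ¬G.Adj u v) {Z : Set V}
    (hZ : ((G.deleteIncidenceSet u).deleteIncidenceSet v).IsSeparator (G.neighborSet u)
      (G.neighborSet v) Z) :
    G.IsSeparator {u} {v} (Z \ {u, v}) := by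
  intro a ha b hb p
  obtain rfl : u = a := (Set.mem_singleton_iff.mp ha).symm
  obtain rfl : v = b := (Set.mem_singleton_iff.mp hb).symm
  obtain ⟨a, b, r, hua, hbv, hur, hvr, hrp⟩ := p.exists_interior huv hadj
  have hne {z : V} (hz : z ∈ r.support) : z ≠ u ∧ z ≠ v :=
    ⟨fun h => hur (h ▸ hz), fun h => hvr (h ▸ hz)⟩
  have hr := r.edges_subset_edgeSet_of_forall_adj
    (G' := (G.deleteIncidenceSet u).deleteIncidenceSet v) fun c hc d hd hcd => by
      simp only [deleteIncidenceSet_adj]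
      exact ⟨⟨hcd, (hne hc).1, (hne hd).1⟩, (hne hc).2, (hne hd).2⟩
  obtain ⟨z, hz, hzZ⟩ := hZ hua hbv.symm (r.transfer _ hr)
  rw [support_transfer] at hz
  exact ⟨z, hrp hz, hzZ, by simpa using hne hz⟩

lemma HasDisjointPaths.hasIDPaths (huv : u ≠ v) (hadj : ¬G.Adj u v)
    (h : ((G.deleteIncidenceSet u).deleteIncidenceSet v).HasDisjointPaths (G.neighborSet u)
      (G.neighborSet v) k) :
    HasIDPaths G u v k := by
  obtain ⟨a, b, q, ha, hb, hq, hd⟩ := h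
  have hu i : u ∉ (q i).support := notMem_support_of_forall_not_adj
    (fun z hz => by simp [deleteIncidenceSet_adj] at hz) (fun h => hadj (h ▸ hb i).symm) (q i)
  have hv i : v ∉ (q i).support := notMem_support_of_forall_not_adj
    (fun z hz => by simp [deleteIncidenceSet_adj] at hz) (hb i).ne.symm (q i)
  have hle : (G.deleteIncidenceSet u).deleteIncidenceSet v ≤ G :=
    (deleteIncidenceSet_le _ _).trans (deleteIncidenceSet_le _ _)
  have ha' i : G.Adj u (a i) := ha i
  have hb' i : G.Adj (b i) v := (hb i).symm
  let W i : G.Walk u v := cons (ha' i) (((q i).mapLe hle).concat (hb' i))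
  have hW i : (W i).support = u :: ((q i).support ++ [v]) := by simp [W]
  have hWpath i : (W i).IsPath := by
    refine (cons_isPath_iff _ _).mpr ⟨((hq i).mapLe hle).concat (by simpa using hv i) _, ?_⟩
    simpa [support_concat, huv] using hu i
  refine ⟨fun i => ⟨W i, hWpath i⟩, fun i j hij => ?_, fun i j hij z hzi hzj => ?_⟩
  · by_contra hne
    have hai : a i ∈ (W j).support := by
      rw [← show W i = W j from congrArg Subtype.val hij, hW]
      simp
    simp only [hW, List.mem_cons, List.mem_append, List.not_mem_nil, or_false] at hai
    rcases hai with h | h | h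
    · exact hu i (h ▸ (q i).start_mem_support)
    · exact hd hne (start_mem_support _) h
    · exact hv i (h ▸ (q i).start_mem_support)
  · simp only [hW, List.mem_cons, List.mem_append, List.not_mem_nil, or_false] at hzi hzj
    rcases hzi with rfl | hzi | rfl
    · exact Or.inl rfl
    · rcases hzj with rfl | hzj | rfl
      · exact Or.inl rfl
      · exact absurd hzj (hd hij hzi)
      · exact Or.inr rfl
    · exact Or.inr rfl

theorem hasIDPaths_of_forall_exists_walk [Finite V] (huv : u ≠ v) (hadj : ¬G.Adj u v)
    (h : ∀ X : Set V, u ∉ X → v ∉ X → X.ncard < k → ∃ p : G.Walk u v, ∀ z ∈ p.support, z ∉ X) :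
    HasIDPaths G u v k := by
  refine HasDisjointPaths.hasIDPaths huv hadj (hasDisjointPaths_of_forall_isSeparator
    fun Z hZ => ?_)
  by_contra! hZk
  obtain ⟨p, hp⟩ := h (Z \ {u, v}) (by simp) (by simp)
    ((Set.ncard_le_ncard Set.sdiff_subset (Set.toFinite _)).trans_lt hZk)
  obtain ⟨z, hz, hzZ⟩ := hZ.sdiff_of_deleteIncidenceSet huv hadj rfl rfl p
  exact hp z hz hzZ

lemma HasIDPaths.succ_of_deleteEdges (hadj : G.Adj u v)
    (h : HasIDPaths (G.deleteEdges {s(u, v)}) u v k) : HasIDPaths G u v (k + 1) := by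
  obtain ⟨P, hinj, hd⟩ := h
  let Q i : G.Path u v := (P i).map (Hom.ofLE (deleteEdges_le _)) injective_id
  have hQ i : (Q i).1.support = (P i).1.support := by simp [Q]
  refine ⟨Fin.cons (Path.singleton hadj) Q, Fin.cons_injective_iff.mpr ⟨?_, ?_⟩, ?_⟩
  · rintro ⟨i, hi⟩
    have hPi : (P i).1.edges = [s(u, v)] := by
      simpa [Q, Path.singleton] using congrArg (fun p : G.Path u v => p.1.edges) hi
    have he : s(u, v) ∈ (P i).1.edges := by simp [hPi]
    simpa using (P i).1.edges_subset_edgeSet he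
  · exact (Path.map_injective _ _ _).comp hinj
  · intro i j hij z hzi hzj
    induction i using Fin.cases with
    | zero => simpa [Path.singleton] using hzi
    | succ i =>
      induction j using Fin.cases with
      | zero => simpa [Path.singleton] using hzj
      | succ j =>
        simp only [Fin.cons_succ, hQ] at hzi hzj
        exact hd i j (fun h => hij (h ▸ rfl)) z hzi hzj

lemma ncard_setOf_exists_mem_support_le [Finite V] {P : Fin k → G.Path u v}
    (hP : ∀ i j, i ≠ j → ∀ w, w ∈ (P i).val.support → w ∈ (P j).val.support → w = u ∨ w = v)
    (hu : u ∉ X) (hv : v ∉ X) : {i | ∃ z ∈ (P i).1.support, z ∈ X}.ncard ≤ X.ncard := by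
  have hmeet : ∀ i ∈ {i | ∃ z ∈ (P i).1.support, z ∈ X}, ∃ z ∈ (P i).1.support, z ∈ X :=
    fun _ hi => hi
  have : Nonempty V := ⟨u⟩
  choose! z hz hzX using hmeet
  refine Set.ncard_le_ncard_of_injOn z hzX (fun i hi j hj hij => ?_) (Set.toFinite _)
  by_contra hne
  rcases hP i j hne (z i) (hz i hi) (hij ▸ hz j hj) with h | h
  · exact hu (h ▸ hzX i hi)
  · exact hv (h ▸ hzX i hi)

lemma HasIDPaths.exists_walk_avoiding [Finite V] (h : HasIDPaths G u v k) (hu : u ∉ X)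
    (hv : v ∉ X) (hX : X.ncard < k) : ∃ p : G.Walk u v, ∀ z ∈ p.support, z ∉ X := by
  obtain ⟨P, -, hP⟩ := h
  by_contra! hall
  have hle := ncard_setOf_exists_mem_support_le hP hu hv
  have huniv : {i | ∃ z ∈ (P i).1.support, z ∈ X} = Set.univ :=
    Set.eq_univ_of_forall fun i => hall (P i).1
  rw [huniv, Set.ncard_univ, Nat.card_fin] at hle
  omega

lemma Walk.IsPath.support_eq_pair {p : G.Walk u v} (hp : p.IsPath) (huv : u ≠ v)
    (h : ∀ z ∈ p.support, z = u ∨ z = v) : p.support = [u, v] := by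
  obtain ⟨w, huw, q, rfl⟩ := exists_eq_cons_of_ne huv p
  rw [cons_isPath_iff] at hp
  obtain rfl : w = v := (h w (by simp)).resolve_left fun hwu => hp.2 (hwu ▸ q.start_mem_support)
  simp [(isPath_iff_nil.mp hp.1).eq_nil]

lemma HasIDPaths.add_one_le_card [Finite V] (huv : u ≠ v) (h : HasIDPaths G u v k) :
    k + 1 ≤ Nat.card V := by
  obtain ⟨P, hinj, hP⟩ := h
  set I := {i | ∃ z ∈ (P i).1.support, z ∈ ({u, v}ᶜ : Set V)}
  have hI : I.ncard ≤ ({u, v}ᶜ : Set V).ncard :=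
    ncard_setOf_exists_mem_support_le hP (by simp) (by simp)
  have hIc : Iᶜ.ncard ≤ 1 := by
    refine (Set.ncard_le_one_iff).mpr fun {i j} hi hj => hinj (Subtype.ext (ext_support ?_))
    simp only [I, Set.mem_compl_iff, Set.mem_ofPred_eq, not_exists, not_and, not_not,
      Set.mem_insert_iff, Set.mem_singleton_iff] at hi hj
    rw [(P i).2.support_eq_pair huv hi, (P j).2.support_eq_pair huv hj]
  have hk := Set.ncard_add_ncard_compl I
  have hV := Set.ncard_add_ncard_compl ({u, v} : Set V)
  rw [Nat.card_fin] at hk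
  rw [Set.ncard_pair huv] at hV
  omega

lemma exists_walk_deleteEdges_avoiding [Finite V] (hcard : k + 2 ≤ Nat.card V)
    (h : ∀ Y : Set V, Y.ncard < k + 1 → ∀ a b, a ∉ Y → b ∉ Y →
      ∃ p : G.Walk a b, ∀ z ∈ p.support, z ∉ Y)
    (huv : u ≠ v) (hu : u ∉ X) (hv : v ∉ X) (hX : X.ncard < k) :
    ∃ p : (G.deleteEdges {s(u, v)}).Walk u v, ∀ z ∈ p.support, z ∉ X := by
  -- a third vertex `w` outside `X` gives a `u`-`w`-`v` walk avoiding the edge `uv`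
  obtain ⟨w, hw⟩ : ∃ w, w ∉ insert u (insert v X) := by
    by_contra! hall
    have h1 := Set.ncard_insert_le u (insert v X)
    have h2 := Set.ncard_insert_le v X
    rw [Set.eq_univ_of_forall hall, Set.ncard_univ] at h1
    omega
  simp only [Set.mem_insert_iff, not_or] at hw
  have hlt (c : V) : (insert c X).ncard < k + 1 := (Set.ncard_insert_le c X).trans_lt (by omega)
  obtain ⟨p, hp⟩ := h _ (hlt v) u w (by simp [huv, hu]) (by simp [hw.2.1, hw.2.2])
  obtain ⟨q, hq⟩ := h _ (hlt u) w v (by simp [hw.1, hw.2.2]) (by simp [huv.symm, hv])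
  have hne : ∀ e ∈ (p.append q).edges, e ∉ ({s(u, v)} : Set (Sym2 V)) := by
    rintro e he rfl
    rcases List.mem_append.mp ((edges_append p q) ▸ he) with he | he
    · exact hp v (p.snd_mem_support_of_mem_edges he) (Set.mem_insert _ _)
    · exact hq u (q.fst_mem_support_of_mem_edges he) (Set.mem_insert _ _)
  refine ⟨(p.append q).toDeleteEdges _ hne, fun z hz hzX => ?_⟩
  rcases (mem_support_append_iff _ _).mp (by simpa using hz) with hz | hz
  · exact hp z hz (Set.mem_insert_of_mem _ hzX)
  · exact hq z hz (Set.mem_insert_of_mem _ hzX)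

theorem kConnected_of_forall_exists_walk [Finite V] (hcard : k + 1 ≤ Nat.card V)
    (h : ∀ X : Set V, X.ncard < k → ∀ a b, a ∉ X → b ∉ X →
      ∃ p : G.Walk a b, ∀ z ∈ p.support, z ∉ X) :
    KConnected G k := by
  intro u v huv
  by_cases hadj : G.Adj u v
  · obtain _ | k := k
    · exact ⟨finZeroElim, fun i => i.elim0, fun i => i.elim0⟩
    exact .succ_of_deleteEdges hadj (hasIDPaths_of_forall_exists_walk huv (by simp)
      fun X hu hv hX => exists_walk_deleteEdges_avoiding hcard h huv hu hv hX)
  · exact hasIDPaths_of_forall_exists_walk huv hadj fun X hu hv hX => h X hX u v hu hv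

lemma Walk.exists_walk_avoiding_of_forall_adj {W : Type*} {K : SimpleGraph W}
    {H : SimpleGraph V} (φ : W → V)
    (h : ∀ c d, K.Adj c d → φ c ∉ X → φ d ∉ X →
      ∃ q : H.Walk (φ c) (φ d), ∀ z ∈ q.support, z ∉ X)
    {a b : W} (p : K.Walk a b) (hp : ∀ z ∈ p.support, φ z ∉ X) :
    ∃ q : H.Walk (φ a) (φ b), ∀ z ∈ q.support, z ∉ X := by
  induction p with
  | nil => exact ⟨nil, by simpa using hp⟩
  | @cons c d e hcd p ih =>
    obtain ⟨q₁, hq₁⟩ := h c d hcd (hp c (by simp)) (hp d (by simp))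
    obtain ⟨q₂, hq₂⟩ := ih fun z hz => hp z (by simp [hz])
    exact ⟨q₁.append q₂, fun z hz => ((mem_support_append_iff _ _).mp hz).elim (hq₁ z) (hq₂ z)⟩

section Domination

variable [Finite V] {T U W : Set V} {m : ℕ}

lemma exists_walk_induce_to_mem_of_dominating (hTW : T ⊆ W)
    (hdom : ∀ v ∉ T, m ≤ (T ∩ G.neighborSet v).ncard) {X : Set W} (hX : X.ncard < m) (c : W)
    (hc : c ∉ X) : ∃ t : W, (t : V) ∈ T ∧ t ∉ X ∧
      ∃ q : (G.induce W).Walk c t, ∀ z ∈ q.support, z ∉ X := by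
  by_cases hcT : (c : V) ∈ T
  · exact ⟨c, hcT, hc, nil, by simpa using hc⟩
  obtain ⟨t, ⟨htT, hct⟩, htX⟩ : ∃ t ∈ T ∩ G.neighborSet c, t ∉ Subtype.val '' X := by
    by_contra! hsub
    have hle := (Set.ncard_le_ncard hsub (Set.toFinite _)).trans
      (Set.ncard_image_of_injective X Subtype.val_injective).le
    have hm := hdom c hcT
    omega
  have hadj : (G.induce W).Adj c ⟨t, hTW htT⟩ := hct
  refine ⟨⟨t, hTW htT⟩, htT, fun h => htX ⟨_, h, rfl⟩, cons hadj nil, fun z hz => ?_⟩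
  rcases (by simpa using hz : z = c ∨ z = ⟨t, hTW htT⟩) with rfl | rfl
  · exact hc
  · exact fun h => htX ⟨_, h, rfl⟩

lemma exists_walk_induce_of_kConnected_sup (hUW : U ⊆ W) {J : SimpleGraph V}
    (hconn : KConnected ((G ⊔ J).induce U) k)
    (hJ : ∀ a b : W, J.Adj a b → HasIDPaths (G.induce W) a b k) {X : Set W} (hX : X.ncard < k)
    (a b : U) (ha : Set.inclusion hUW a ∉ X) (hb : Set.inclusion hUW b ∉ X) :
    ∃ q : (G.induce W).Walk (Set.inclusion hUW a) (Set.inclusion hUW b),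
      ∀ z ∈ q.support, z ∉ X := by
  have hX' : (Set.inclusion hUW ⁻¹' X).ncard < k :=
    (Set.ncard_le_ncard_of_injOn (Set.inclusion hUW) (fun _ hz => hz)
      (Set.inclusion_injective hUW).injOn (Set.toFinite X)).trans_lt hX
  obtain ⟨p, hp⟩ : ∃ p : ((G ⊔ J).induce U).Walk a b,
      ∀ z ∈ p.support, z ∉ Set.inclusion hUW ⁻¹' X := by
    by_cases hab : a = b
    · subst hab
      exact ⟨nil, by simpa using ha⟩
    · exact (hconn a b hab).exists_walk_avoiding ha hb hX'
  refine p.exists_walk_avoiding_of_forall_adj _ (fun c d hcd hc hd => ?_) hp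
  rcases hcd with hG | hJcd
  · have hadj : (G.induce W).Adj (Set.inclusion hUW c) (Set.inclusion hUW d) := hG
    exact ⟨cons hadj nil, by simp [hc, hd]⟩
  · exact (hJ _ _ hJcd).exists_walk_avoiding hc hd hX

lemma add_one_le_card_of_dominating (hTU : T ⊆ U) (hUW : U ⊆ W) {J : SimpleGraph V}
    (hkm : k ≤ m) (hdom : ∀ v ∉ T, m ≤ (T ∩ G.neighborSet v).ncard)
    (hconn : KConnected ((G ⊔ J).induce U) k) {u v : W} (huv : u ≠ v) :
    k + 1 ≤ Nat.card W := by
  rw [Nat.card_coe_set_eq]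
  by_cases hWT : ∃ w : W, (w : V) ∉ T
  · obtain ⟨w, hw⟩ := hWT
    calc k + 1 ≤ (T ∩ G.neighborSet w).ncard + 1 := by gcongr; exact hkm.trans (hdom w hw)
      _ ≤ T.ncard + 1 := by gcongr; exacts [Set.toFinite T, Set.inter_subset_left]
      _ ≤ W.ncard := Set.ncard_lt_ncard ⟨hTU.trans hUW, fun h => hw (h w.2)⟩
  · push Not at hWT
    have huv' : (⟨u, hTU (hWT u)⟩ : U) ≠ ⟨v, hTU (hWT v)⟩ := fun h =>
      huv (Subtype.ext (Subtype.mk_eq_mk.mp h))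
    have hcard := (hconn _ _ huv').add_one_le_card huv'
    rw [Nat.card_coe_set_eq] at hcard
    exact hcard.trans (Set.ncard_le_ncard hUW)

theorem kConnected_induce_of_dominating (hTU : T ⊆ U) (hUW : U ⊆ W) {J : SimpleGraph V}
    (hkm : k ≤ m) (hdom : ∀ v ∉ T, m ≤ (T ∩ G.neighborSet v).ncard)
    (hconn : KConnected ((G ⊔ J).induce U) k)
    (hJ : ∀ a b : W, J.Adj a b → HasIDPaths (G.induce W) a b k) :
    KConnected (G.induce W) k := by
  intro u v huv
  refine kConnected_of_forall_exists_walk (add_one_le_card_of_dominating hTU hUW hkm hdom hconn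
    huv) (fun X hX a b ha hb => ?_) u v huv
  obtain ⟨ta, hta, htaX, pa, hpa⟩ :=
    exists_walk_induce_to_mem_of_dominating (hTU.trans hUW) hdom (hX.trans_le hkm) a ha
  obtain ⟨tb, htb, htbX, pb, hpb⟩ :=
    exists_walk_induce_to_mem_of_dominating (hTU.trans hUW) hdom (hX.trans_le hkm) b hb
  obtain ⟨q, hq⟩ := exists_walk_induce_of_kConnected_sup hUW hconn hJ hX
    ⟨ta, hTU hta⟩ ⟨tb, hTU htb⟩ htaX htbX
  refine ⟨pa.append (q.append pb.reverse), fun z hz => ?_⟩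
  simp only [mem_support_append_iff, support_reverse, List.mem_reverse] at hz
  rcases hz with hz | hz | hz
  exacts [hpa z hz, hq z hz, hpb z hz]

end Domination

end SimpleGraph

theorem solution_is_km_cds_general
    {V : Type*} [Fintype V] (G : SimpleGraph V) (k m : ℕ)
    (hkm : k ≤ m)
    (T S P : Set V)
    (hdom : ∀ v : V, v ∉ T → m ≤ (T ∩ G.neighborSet v).ncard)
    (J : SimpleGraph V)
    (hconn : KConnected ((G ⊔ J).induce (T ∪ S)) k)
    (hpaths : ∀ u v : ↥(T ∪ S ∪ P), J.Adj (u : V) (v : V) →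
      HasIDPaths (G.induce (T ∪ S ∪ P)) u v k) :
    (∀ v : V, v ∉ T ∪ S ∪ P → m ≤ ((T ∪ S ∪ P) ∩ G.neighborSet v).ncard) ∧
    KConnected (G.induce (T ∪ S ∪ P)) k :=
  ⟨fun v hv => (hdom v fun hvT => hv (Or.inl (Or.inl hvT))).trans
      (Set.ncard_le_ncard (Set.inter_subset_inter_left _ fun _ hx => Or.inl (Or.inl hx))),
    kConnected_induce_of_dominating Set.subset_union_left Set.subset_union_left hkm hdom hconn
      hpaths⟩

/-- Feasibility of the algorithm's output. If `T` is an `m`-dominating set of `G`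
(`m ≥ k ≥ 1`), `S, P ⊆ V \ T`, `R ⊆ T`, and `J` is a set of edges on `R`
such that `G[T ∪ S] ∪ J` is `k`-connected and for every edge `uv ∈ J` the
induced subgraph `G[T ∪ S ∪ P]` contains `k` internally disjoint `u`-`v` paths,
then `T ∪ S ∪ P` is a `(k,m)`-cds of `G`: it is an `m`-dominating set and
the induced subgraph `G[T ∪ S ∪ P]` is `k`-connected. -/
theorem solution_is_km_cds
    {V : Type*} [Fintype V] (G : SimpleGraph V) (k m : ℕ)
    (hk : 1 ≤ k) (hkm : k ≤ m)
    (T S P : Set V) (hS : S ⊆ Tᶜ) (hP : P ⊆ Tᶜ)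
    (hdom : ∀ v : V, v ∉ T → m ≤ (T ∩ G.neighborSet v).ncard)
    (R : Set V) (hRT : R ⊆ T)
    (J : SimpleGraph V) (hJR : ∀ u v : V, J.Adj u v → u ∈ R ∧ v ∈ R)
    (hconn : KConnected ((G ⊔ J).induce (T ∪ S)) k)
    (hpaths : ∀ u v : ↥(T ∪ S ∪ P), J.Adj (u : V) (v : V) →
      HasIDPaths (G.induce (T ∪ S ∪ P)) u v k) :
    (∀ v : V, v ∉ T ∪ S ∪ P → m ≤ ((T ∪ S ∪ P) ∩ G.neighborSet v).ncard) ∧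
    KConnected (G.induce (T ∪ S ∪ P)) k :=
  solution_is_km_cds_general G k m hkm T S P hdom J hconn hpaths
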